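/- arXiv:2407.20173 — 2 statements merged into one kernel-verified Lean document; each statement's English description precedes it below -/
import Mathlib

section
/- For every natural number n ≥ 1, the sum Σ_{w=1}^{n} C(n,w)·3^w/(1 + w(w−1)) is at least (4^n − 1)/(n² − n + 1). -/
/-! Each denominator `1 + w (w - 1)` with `w ≤ n` is at most `n² - n + 1`, and the numerators sum
to `4 ^ n - 1` by the binomial theorem. -/

open Finset

theorem sum_Icc_one_choose_mul_pow {R : Type*} [CommRing R] (x : R) (n : ℕ) :
    ∑ w ∈ Icc 1 n, (n.choose w : R) * x ^ w = (x + 1) ^ n - 1 := by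
  rw [add_pow, range_eq_Ico, sum_eq_sum_Ico_succ_bot (by omega : 0 < n + 1), zero_add,
    Ico_add_one_right_eq_Icc]
  simp only [one_pow, mul_one, pow_zero, Nat.choose_zero_right, Nat.cast_one,
    add_sub_cancel_left]
  exact sum_congr rfl fun _ _ => mul_comm _ _

theorem one_add_mul_sub_one_pos {K : Type*} [Field K] [LinearOrder K] [IsStrictOrderedRing K]
    (x : K) : 0 < 1 + x * (x - 1) := by
  nlinarith [sq_nonneg (2 * x - 1)]

theorem mul_sub_one_le_mul_sub_one {w n : ℕ} (h : w ≤ n) :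
    (w : ℝ) * (w - 1) ≤ n * (n - 1) := by
  -- the truncated `m - 1` is harmless because the factor `m` vanishes at `m = 0`
  have cast_mul_sub_one (m : ℕ) : ((m * (m - 1) : ℕ) : ℝ) = m * (m - 1) := by
    cases m <;> simp
  rw [← cast_mul_sub_one, ← cast_mul_sub_one]
  exact_mod_cast Nat.mul_le_mul h (Nat.sub_le_sub_right h 1)

theorem total_removed_lower_bound_general (n : ℕ) :
    ∑ w ∈ Finset.Icc 1 n, (n.choose w : ℝ) * 3 ^ w / (1 + w * (w - 1))
      ≥ ((4 : ℝ) ^ n - 1) / ((n : ℝ) ^ 2 - n + 1) := by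
  have hden : (n : ℝ) ^ 2 - n + 1 = 1 + n * (n - 1) := by ring
  calc ((4 : ℝ) ^ n - 1) / ((n : ℝ) ^ 2 - n + 1)
      = ∑ w ∈ Icc 1 n, (n.choose w : ℝ) * 3 ^ w / (1 + n * (n - 1)) := by
        rw [← sum_div, sum_Icc_one_choose_mul_pow, hden]
        norm_num
    _ ≤ ∑ w ∈ Icc 1 n, (n.choose w : ℝ) * 3 ^ w / (1 + w * (w - 1)) := by
        refine sum_le_sum fun w hw => div_le_div_of_nonneg_left (by positivity)
          (one_add_mul_sub_one_pos _) ?_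
        linarith [mul_sub_one_le_mul_sub_one (mem_Icc.mp hw).2]

theorem total_removed_lower_bound (n : ℕ) (hn : 1 ≤ n) :
    ∑ w ∈ Finset.Icc 1 n, (n.choose w : ℝ) * 3 ^ w / (1 + w * (w - 1))
      ≥ ((4 : ℝ) ^ n - 1) / ((n : ℝ) ^ 2 - n + 1) :=
  total_removed_lower_bound_general n
end

section
/- Let 0 < ε < 1 and n ≥ 2 a natural number, and let F = (1 − ε)/(1 − εⁿ) (the fidelity of the exponentially decaying global Pauli noise model). Then (1 − ε)/(1 − εⁿ − (1 − ε)ε) ≥ 1 − 2ε², i.e., removing the weight-1 error mass gives output fidelity at least 1 − 2ε². -/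
/-! All that matters about `t = εⁿ` is `0 ≤ t ≤ ε²`. The denominator is then at least `1 - ε > 0`,
and when `1 - 2ε² > 0` the bound follows from `(1 - 2ε²)(1 - ε + ε²) = 1 - ε - ε²((1 - ε)² + ε²)`. -/

theorem one_sub_two_mul_sq_le_div {K : Type*} [Field K] [LinearOrder K] [IsStrictOrderedRing K]
    {ε t : K} (hε : ε < 1) (ht₀ : 0 ≤ t) (ht : t ≤ ε ^ 2) :
    1 - 2 * ε ^ 2 ≤ (1 - ε) / (1 - t - (1 - ε) * ε) := by
  have hD : 1 - ε ≤ 1 - t - (1 - ε) * ε := by linarith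
  rw [le_div_iff₀ (by linarith)]
  rcases le_or_gt (1 - 2 * ε ^ 2) 0 with hneg | hpos
  · linarith [mul_nonpos_of_nonpos_of_nonneg hneg (show 0 ≤ 1 - t - (1 - ε) * ε by linarith)]
  · calc (1 - 2 * ε ^ 2) * (1 - t - (1 - ε) * ε)
        ≤ (1 - 2 * ε ^ 2) * (1 - ε + ε ^ 2) := by gcongr; linarith
      _ = 1 - ε - ε ^ 2 * ((1 - ε) ^ 2 + ε ^ 2) := by ring
      _ ≤ 1 - ε := sub_le_self _ (by positivity)

theorem global_noise_quadratic_reduction (ε : ℝ) (n : ℕ) (h0 : 0 < ε) (h1 : ε < 1)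
    (hn : 2 ≤ n) :
    (1 - ε) / (1 - ε ^ n - (1 - ε) * ε) ≥ 1 - 2 * ε ^ 2 :=
  one_sub_two_mul_sq_le_div h1 (pow_nonneg h0.le n) (pow_le_pow_of_le_one h0.le h1.le hn)
end
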